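/- Let z ∈ ℂ with α := Re z ≥ 1 and ℓ ∈ ℕ₀, and let H₀(x) = (1-x)^z Σ_{k=0}^{ℓ} C(z+ℓ, k) (1-x)^{ℓ-k} x^k for x ∈ [0,1]. Then there exists a constant C > 0 such that |H₀(x) - 1| ≤ C·x for all x ∈ [0,1]. -/

import Mathlib

open Complex Finset

/-- Generalized binomial coefficient `C(w, j) = Γ(w+1) / (Γ(j+1) Γ(w-j+1))`. -/
noncomputable def genBinom (w : ℂ) (j : ℕ) : ℂ :=
  Complex.Gamma (w + 1) / (Complex.Gamma ((j : ℂ) + 1) * Complex.Gamma (w - j + 1))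

/-- The pseudo-spline filter in the variable `x = sin²πγ`:
`H₀(x) = (1-x)^z ∑_{k=0}^ℓ C(z+ℓ,k) (1-x)^{ℓ-k} x^k`, with `(1-x)^z` the principal
complex power (equal to `exp (z log(1-x))` for `x < 1` and `0` at `x = 1`). -/
noncomputable def filterX (z : ℂ) (ℓ : ℕ) (x : ℝ) : ℂ :=
  (((1 - x : ℝ) : ℂ)) ^ z *
    ∑ k ∈ range (ℓ + 1), genBinom (z + ℓ) k * ((1 : ℂ) - x) ^ (ℓ - k) * (x : ℂ) ^ k

/-! A function continuous on a compact interval and differentiable at its left endpoint `a`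
satisfies `‖f x - f a‖ ≤ C (x - a)`: near `a` by the derivative, away from `a` by boundedness.
For `Re z > 0` the filter `H₀` is continuous on `[0, 1]` and differentiable at `0`, and
`H₀(0) = 1` because only the `k = 0` term survives and `C(w, 0) = 1`. -/

theorem exists_norm_sub_le_mul_sub_of_continuousOn_of_differentiableWithinAt
    {E : Type*} [NormedAddCommGroup E] [NormedSpace ℝ E] {f : ℝ → E} {a b : ℝ}
    (hf : ContinuousOn f (Set.Icc a b)) (hfa : DifferentiableWithinAt ℝ f (Set.Icc a b) a) :
    ∃ C > 0, ∀ x ∈ Set.Icc a b, ‖f x - f a‖ ≤ C * (x - a) := by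
  obtain ⟨M, hM⟩ := isCompact_Icc.exists_bound_of_continuousOn (hf.sub continuousOn_const)
  obtain ⟨c, hc, hcO⟩ := hfa.isBigO_sub.exists_pos
  obtain ⟨ε, hε, hball⟩ := Metric.mem_nhdsWithin_iff.mp hcO.bound
  refine ⟨c + |M| / ε, by positivity, fun x hx => ?_⟩
  have hxa : 0 ≤ x - a := sub_nonneg.mpr hx.1
  rcases lt_or_ge (x - a) ε with hnear | hfar
  · calc ‖f x - f a‖ ≤ c * ‖x - a‖ :=
          hball ⟨by rwa [Metric.mem_ball, Real.dist_eq, abs_of_nonneg hxa], hx⟩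
      _ = c * (x - a) := by rw [Real.norm_of_nonneg hxa]
      _ ≤ (c + |M| / ε) * (x - a) := by gcongr; exact le_add_of_nonneg_right (by positivity)
  · calc ‖f x - f a‖ ≤ |M| / ε * ε := by
          rw [div_mul_cancel₀ _ hε.ne']; exact (hM x hx).trans (le_abs_self M)
      _ ≤ (c + |M| / ε) * (x - a) := by nlinarith [abs_nonneg M, div_nonneg (abs_nonneg M) hε.le]

theorem genBinom_zero {w : ℂ} (hw : Gamma (w + 1) ≠ 0) : genBinom w 0 = 1 := by
  simp [genBinom, hw]

theorem filterX_zero {z : ℂ} {ℓ : ℕ} (hz : Gamma (z + ℓ + 1) ≠ 0) : filterX z ℓ 0 = 1 := by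
  simp [filterX, sum_range_succ', genBinom_zero hz]

theorem continuous_filterX {z : ℂ} (hz : 0 < z.re) (ℓ : ℕ) : Continuous (filterX z ℓ) := by
  unfold filterX
  have : Continuous fun x : ℝ => (((1 - x : ℝ) : ℂ)) ^ z :=
    (continuous_ofReal_cpow_const hz).comp (continuous_const.sub continuous_id)
  fun_prop

theorem differentiableAt_filterX_zero {z : ℂ} (hz : z ≠ 0) (ℓ : ℕ) :
    DifferentiableAt ℝ (filterX z ℓ) 0 := by
  unfold filterX
  have : DifferentiableAt ℝ (fun x : ℝ => (((1 - x : ℝ) : ℂ)) ^ z) 0 :=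
    (differentiableAt_id.const_sub 1).ofReal_cpow_const (by norm_num) hz
  fun_prop

theorem stmt9 (z : ℂ) (hz : 1 ≤ z.re) (ℓ : ℕ) :
    ∃ C > 0, ∀ x ∈ Set.Icc (0:ℝ) 1,
      ‖filterX z ℓ x - 1‖ ≤ C * x := by
  have hre : 0 < z.re := by linarith
  have hGamma : Gamma (z + ℓ + 1) ≠ 0 :=
    Gamma_ne_zero_of_re_pos (by simp only [add_re, natCast_re, one_re]; positivity)
  obtain ⟨C, hC, hbound⟩ := exists_norm_sub_le_mul_sub_of_continuousOn_of_differentiableWithinAt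
    (continuous_filterX hre ℓ).continuousOn
    (differentiableAt_filterX_zero (ne_zero_of_re_pos hre) ℓ).differentiableWithinAt (b := 1)
  refine ⟨C, hC, fun x hx => ?_⟩
  simpa [filterX_zero hGamma] using hbound x hx
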